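/- arXiv:0806.3249 — 2 statements merged into one kernel-verified Lean document; each statement's English description precedes it below -/
import Mathlib

section
/- Let G = (V,E) be a finite simple graph with n vertices and c connected components, and let P_G(q) = ∑_{A ⊆ E} (−1)^{|A|} q^{k(A)} be its chromatic polynomial (Whitney's expansion). Then for every integer ℓ ≥ 0, the ℓ-th derivative of the function q ↦ P_G(q)/q^c evaluated at q = 1 satisfies (−1)^{n−c−ℓ} · (d^ℓ/dq^ℓ)(P_G(q)/q^c)|_{q=1} ≥ 0. -/
open Finset

/-- The number of connected components of the spanning subgraph of a finite graph
with edge set `A`. -/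
noncomputable def numCompOfEdges {V : Type*} [Fintype V] (A : Finset (Sym2 V)) : ℕ :=
  Nat.card (SimpleGraph.fromEdgeSet (A : Set (Sym2 V))).ConnectedComponent

/-- The chromatic polynomial of a finite simple graph, via Whitney's expansion
`P_G(q) = ∑_{A ⊆ E} (-1)^{|A|} q^{k(A)}`, as a function of the real variable `q`. -/
noncomputable def chromPoly {V : Type*} [Fintype V] [DecidableEq V] (G : SimpleGraph V)
    [DecidableRel G.Adj] (q : ℝ) : ℝ :=
  ∑ A ∈ G.edgeFinset.powerset, (-1 : ℝ) ^ A.card * q ^ numCompOfEdges A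

/-!
With `r A = |V| - k(A)`, the rank function of the cycle matroid, `P_G(q) / q^c` is the
characteristic polynomial `∑_{A ⊆ E} (-1)^{|A|} q^{r E - r A}`, whose `ℓ`-th derivative at `1` is
`ℓ!` times `∑_{A ⊆ E} (-1)^{|A|} C(r E - r A, ℓ)`. This sum has sign `(-1)^{r E + ℓ}` for any
matroid rank function, by deletion–contraction of an element `e`: it vanishes if `e` is a loop,
it becomes the sum for `E - e` and `ℓ - 1` if `e` is a coloop, and otherwise it is the sum for
the deletion minus the sum for the contraction, which has rank one less and so opposite sign.
-/

section RankFunction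

variable {α : Type*}

/-- The `ℓ`-th Taylor coefficient at `q = 1` of the characteristic polynomial
`∑_{A ⊆ E} (-1)^{|A|} q^{r E - r A}`. -/
def charPolyTaylorCoeff (r : Finset α → ℕ) (E : Finset α) (ℓ : ℕ) : ℤ :=
  ∑ A ∈ E.powerset, (-1) ^ A.card * ((r E - r A).choose ℓ : ℤ)

theorem charPolyTaylorCoeff_zero_of_nonempty (r : Finset α → ℕ) {E : Finset α}
    (hE : E.Nonempty) : charPolyTaylorCoeff r E 0 = 0 := by
  simp [charPolyTaylorCoeff, sum_powerset_neg_one_pow_card_of_nonempty hE]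

variable [DecidableEq α]

/-- The matroid rank axioms in unit-increase form; the last field is equivalent to
submodularity. -/
structure IsRankFunction (r : Finset α → ℕ) : Prop where
  empty : r ∅ = 0
  le_insert (A : Finset α) (e : α) : r A ≤ r (insert e A)
  insert_le (A : Finset α) (e : α) : r (insert e A) ≤ r A + 1
  insert_eq_add_one_of_subset {A B : Finset α} {e : α} (hAB : A ⊆ B)
    (hB : r (insert e B) = r B + 1) : r (insert e A) = r A + 1

def contractRank (r : Finset α → ℕ) (e : α) (A : Finset α) : ℕ :=
  r (insert e A) - 1

theorem charPolyTaylorCoeff_insert (r : Finset α → ℕ) {e : α} {s : Finset α} (he : e ∉ s)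
    (ℓ : ℕ) : charPolyTaylorCoeff r (insert e s) ℓ = ∑ A ∈ s.powerset, (-1) ^ A.card *
      (((r (insert e s) - r A).choose ℓ : ℤ) - (r (insert e s) - r (insert e A)).choose ℓ) := by
  rw [charPolyTaylorCoeff, sum_powerset_insert he, ← sum_add_distrib]
  refine sum_congr rfl fun A hA => ?_
  rw [card_insert_of_notMem fun heA => he (mem_powerset.mp hA heA)]
  ring

namespace IsRankFunction

variable {r : Finset α → ℕ}

theorem mono (hr : IsRankFunction r) {A B : Finset α} (hAB : A ⊆ B) : r A ≤ r B := by
  suffices ∀ C : Finset α, r A ≤ r (A ∪ C) by simpa [union_eq_right.mpr hAB] using this B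
  intro C
  induction C using Finset.induction_on with
  | empty => simp
  | insert e C _ ih => exact ih.trans (by rw [union_insert]; exact hr.le_insert _ e)

theorem singleton_le_one (hr : IsRankFunction r) (e : α) : r {e} ≤ 1 := by
  simpa [hr.empty] using hr.insert_le ∅ e

theorem insert_eq_of_singleton_eq_zero (hr : IsRankFunction r) {e : α} (he : r {e} = 0)
    (A : Finset α) : r (insert e A) = r A := by
  by_contra hne
  have hA : r (insert e A) = r A + 1 := by
    have := hr.le_insert A e; have := hr.insert_le A e; omega
  have := hr.insert_eq_add_one_of_subset (empty_subset A) hA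
  simp [hr.empty, he] at this

theorem one_le_insert_of_singleton_eq_one (hr : IsRankFunction r) {e : α} (he : r {e} = 1)
    (A : Finset α) : 1 ≤ r (insert e A) :=
  he ▸ hr.mono (singleton_subset_iff.mpr (mem_insert_self e A))

theorem contract (hr : IsRankFunction r) {e : α} (he : r {e} = 1) :
    IsRankFunction (contractRank r e) := by
  have hpos := hr.one_le_insert_of_singleton_eq_one he
  refine ⟨by simp [contractRank, he], fun A f => ?_, fun A f => ?_, fun {A B f} hAB hB => ?_⟩
  · have := hr.le_insert (insert e A) f
    simp only [contractRank, insert_comm e f] at *; omega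
  · have := hr.insert_le (insert e A) f
    simp only [contractRank, insert_comm e f] at *; omega
  · have := hr.insert_eq_add_one_of_subset (insert_subset_insert e hAB) (e := f)
    have := hpos A; have := hpos B
    have := hr.le_insert (insert e B) f; have := hr.insert_le (insert e B) f
    simp only [contractRank, insert_comm e f] at *; omega

variable {e : α} {s : Finset α}

theorem charPolyTaylorCoeff_insert_of_singleton_eq_zero (hr : IsRankFunction r)
    (he : r {e} = 0) (hes : e ∉ s) (ℓ : ℕ) : charPolyTaylorCoeff r (insert e s) ℓ = 0 := by
  rw [charPolyTaylorCoeff_insert r hes]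
  exact sum_eq_zero fun A _ => by
    simp only [hr.insert_eq_of_singleton_eq_zero he, sub_self, mul_zero]

theorem charPolyTaylorCoeff_insert_succ_of_coloop (hr : IsRankFunction r) (hes : e ∉ s)
    (hcol : r (insert e s) = r s + 1) (ℓ : ℕ) :
    charPolyTaylorCoeff r (insert e s) (ℓ + 1) = charPolyTaylorCoeff r s ℓ := by
  rw [charPolyTaylorCoeff_insert r hes, charPolyTaylorCoeff]
  refine sum_congr rfl fun A hA => ?_
  have hAs := mem_powerset.mp hA
  have hA := hr.insert_eq_add_one_of_subset hAs hcol
  have := hr.mono hAs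
  rw [show r (insert e s) - r A = r s - r A + 1 by omega,
    show r (insert e s) - r (insert e A) = r s - r A by omega, Nat.choose_succ_succ']
  push_cast
  ring

theorem charPolyTaylorCoeff_insert_of_not_coloop (hr : IsRankFunction r) (he : r {e} = 1)
    (hes : e ∉ s) (hs : r (insert e s) = r s) (ℓ : ℕ) :
    charPolyTaylorCoeff r (insert e s) ℓ =
      charPolyTaylorCoeff r s ℓ - charPolyTaylorCoeff (contractRank r e) s ℓ := by
  rw [charPolyTaylorCoeff_insert r hes, charPolyTaylorCoeff, charPolyTaylorCoeff,
    ← sum_sub_distrib]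
  refine sum_congr rfl fun A hA => ?_
  have := hr.mono (insert_subset_insert e (mem_powerset.mp hA))
  have := hr.one_le_insert_of_singleton_eq_one he A
  rw [hs, show r s - r (insert e A) = contractRank r e s - contractRank r e A by
    simp only [contractRank]; omega]
  ring

theorem neg_one_pow_mul_charPolyTaylorCoeff_nonneg (hr : IsRankFunction r) (E : Finset α)
    (ℓ : ℕ) : 0 ≤ (-1) ^ (r E + ℓ) * charPolyTaylorCoeff r E ℓ := by
  induction E using Finset.induction_on generalizing r ℓ with
  | empty => cases ℓ <;> simp [charPolyTaylorCoeff, hr.empty]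
  | insert e s hes ih =>
    obtain he | he : r {e} = 0 ∨ r {e} = 1 := by have := hr.singleton_le_one e; omega
    · simp [hr.charPolyTaylorCoeff_insert_of_singleton_eq_zero he hes]
    obtain hcol | hs : r (insert e s) = r s + 1 ∨ r (insert e s) = r s := by
      have := hr.le_insert s e; have := hr.insert_le s e; omega
    · cases ℓ with
      | zero => simp [charPolyTaylorCoeff_zero_of_nonempty r (insert_nonempty e s)]
      | succ ℓ =>
        rw [hr.charPolyTaylorCoeff_insert_succ_of_coloop hes hcol, hcol,
          show r s + 1 + (ℓ + 1) = r s + ℓ + 2 by omega, pow_add, neg_one_sq, mul_one]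
        exact ih hr ℓ
    · have hcontract : contractRank r e s + 1 = r s := by
        have := hr.one_le_insert_of_singleton_eq_one he s
        simp only [contractRank]; omega
      have hdel := ih hr ℓ
      have hcon := ih (hr.contract he) ℓ
      rw [hr.charPolyTaylorCoeff_insert_of_not_coloop he hes hs, hs, ← hcontract] at *
      rw [show contractRank r e s + 1 + ℓ = contractRank r e s + ℓ + 1 by omega, pow_succ] at *
      linarith

end IsRankFunction

end RankFunction

namespace SimpleGraph

variable {V : Type*} {H : SimpleGraph V} {u v x y : V}

theorem fromEdgeSet_insert (s : Set (Sym2 V)) (u v : V) :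
    fromEdgeSet (insert s(u, v) s) = fromEdgeSet s ⊔ edge u v := by
  rw [Set.insert_eq, fromEdgeSet_union, sup_comm, edge]

theorem reachable_or_of_reachable_sup_edge (h : (H ⊔ edge u v).Reachable x y) :
    H.Reachable x y ∨ (H.Reachable x u ∧ H.Reachable v y) ∨
      (H.Reachable x v ∧ H.Reachable u y) := by
  obtain ⟨w⟩ := h
  induction w with
  | nil => exact .inl .rfl
  | cons hadj _ ih =>
    rcases hadj with hadj | hadj
    · have hr := hadj.reachable
      rcases ih with h | ⟨h₁, h₂⟩ | ⟨h₁, h₂⟩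
      · exact .inl (hr.trans h)
      · exact .inr (.inl ⟨hr.trans h₁, h₂⟩)
      · exact .inr (.inr ⟨hr.trans h₁, h₂⟩)
    · obtain ⟨⟨rfl, rfl⟩ | ⟨rfl, rfl⟩, -⟩ := (edge_adj _ _ _ _).mp hadj <;>
        rcases ih with h | ⟨h₁, h₂⟩ | ⟨h₁, h₂⟩
      · exact .inr (.inl ⟨.rfl, h⟩)
      · exact .inr (.inl ⟨.rfl, h₂⟩)
      · exact .inl h₂
      · exact .inr (.inr ⟨.rfl, h⟩)
      · exact .inl h₂
      · exact .inr (.inr ⟨.rfl, h₂⟩)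

theorem card_connectedComponent_sup_edge_of_reachable (h : H.Reachable u v) :
    Nat.card (H ⊔ edge u v).ConnectedComponent = Nat.card H.ConnectedComponent := by
  refine (Nat.card_eq_of_bijective _
    ⟨?_, ConnectedComponent.surjective_map_ofLE le_sup_left⟩).symm
  refine ConnectedComponent.ind₂ fun x y hxy => ?_
  simp only [ConnectedComponent.map_mk, ConnectedComponent.eq] at hxy ⊢
  rcases reachable_or_of_reachable_sup_edge hxy with h' | ⟨h₁, h₂⟩ | ⟨h₁, h₂⟩
  · exact h'
  · exact h₁.trans (h.trans h₂)
  · exact h₁.trans (h.symm.trans h₂)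

/-- The components of `H ⊔ edge u v` are those of `H` with the components of `u` and `v` merged,
so they correspond to the components of `H` other than that of `v`. -/
theorem card_connectedComponent_sup_edge_add_one [Finite V] (h : ¬H.Reachable u v) :
    Nat.card (H ⊔ edge u v).ConnectedComponent + 1 = Nat.card H.ConnectedComponent := by
  classical
  set φ := ConnectedComponent.map (Hom.ofLE (le_sup_left : H ≤ H ⊔ edge u v))
  have hφ : Function.Bijective fun C : {C // C ≠ H.connectedComponentMk v} => φ C := by
    refine ⟨fun ⟨C, hC⟩ ⟨D, hD⟩ hCD => ?_, fun C => ?_⟩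
    · induction C using ConnectedComponent.ind
      induction D using ConnectedComponent.ind
      simp only [φ, ConnectedComponent.map_mk, ConnectedComponent.eq, ne_eq, Subtype.mk.injEq]
        at hC hD hCD ⊢
      rcases reachable_or_of_reachable_sup_edge hCD with h' | ⟨-, h₂⟩ | ⟨h₁, -⟩
      · exact h'
      · exact absurd h₂.symm hD
      · exact absurd h₁ hC
    · obtain ⟨C, rfl⟩ := ConnectedComponent.surjective_map_ofLE le_sup_left C
      induction C using ConnectedComponent.ind with | h x =>
      by_cases hx : H.Reachable x v
      · refine ⟨⟨H.connectedComponentMk u, by simpa using h⟩, ?_⟩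
        simp only [φ, ConnectedComponent.map_mk, ConnectedComponent.eq]
        have huv : u ≠ v := by rintro rfl; exact h .rfl
        have hadj : (H ⊔ edge u v).Adj u v := .inr ((edge_adj ..).mpr ⟨.inl ⟨rfl, rfl⟩, huv⟩)
        exact hadj.reachable.trans (hx.symm.mono le_sup_left)
      · exact ⟨⟨H.connectedComponentMk x, by simpa using hx⟩, rfl⟩
  rw [← Nat.card_eq_of_bijective _ hφ, ← Finite.card_option,
    Nat.card_congr (Equiv.optionSubtypeNe _)]

end SimpleGraph

theorem iteratedDeriv_sum_mul_pow_at_one {𝕜 ι : Type*} [NontriviallyNormedField 𝕜]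
    (s : Finset ι) (a : ι → 𝕜) (m : ι → ℕ) (ℓ : ℕ) :
    iteratedDeriv ℓ (fun q => ∑ i ∈ s, a i * q ^ m i) 1 =
      ℓ.factorial * ∑ i ∈ s, a i * (m i).choose ℓ := by
  rw [iteratedDeriv_fun_sum fun i _ => by fun_prop, mul_sum]
  refine sum_congr rfl fun i _ => ?_
  simp [iteratedDeriv_const_mul_field, Nat.descFactorial_eq_factorial_mul_choose]
  ring

theorem neg_one_zpow_natCast_sub {R : Type*} [DivisionRing R] (a b : ℕ) :
    (-1 : R) ^ ((a : ℤ) - b) = (-1) ^ (a + b) := by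
  rw [zpow_sub₀ (by norm_num), zpow_natCast, zpow_natCast, pow_add, div_eq_mul_inv, ← inv_pow,
    inv_neg_one]

section Graphic

open SimpleGraph

variable {V : Type*} [Fintype V]

theorem numCompOfEdges_empty : numCompOfEdges (∅ : Finset (Sym2 V)) = Fintype.card V := by
  rw [numCompOfEdges, coe_empty, fromEdgeSet_empty, ← Nat.card_eq_fintype_card]
  exact (Nat.card_eq_of_bijective _ ⟨fun x y hxy => reachable_bot.mp
    (ConnectedComponent.eq.mp hxy), fun C => C.exists_rep⟩).symm

theorem numCompOfEdges_anti {A B : Finset (Sym2 V)} (hAB : A ⊆ B) :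
    numCompOfEdges B ≤ numCompOfEdges A :=
  ConnectedComponent.card_le_card_of_le (fromEdgeSet_mono (coe_subset.mpr hAB))

theorem numCompOfEdges_le_card (A : Finset (Sym2 V)) : numCompOfEdges A ≤ Fintype.card V :=
  numCompOfEdges_empty (V := V) ▸ numCompOfEdges_anti (empty_subset A)

theorem numCompOfEdges_edgeFinset [DecidableEq V] (G : SimpleGraph V) [DecidableRel G.Adj] :
    numCompOfEdges G.edgeFinset = Nat.card G.ConnectedComponent := by
  rw [numCompOfEdges, coe_edgeFinset, fromEdgeSet_edgeSet]

variable [DecidableEq V]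

theorem numCompOfEdges_insert_of_reachable {A : Finset (Sym2 V)} {u v : V}
    (h : (fromEdgeSet (A : Set (Sym2 V))).Reachable u v) :
    numCompOfEdges (insert s(u, v) A) = numCompOfEdges A := by
  rw [numCompOfEdges, coe_insert, fromEdgeSet_insert,
    card_connectedComponent_sup_edge_of_reachable h, numCompOfEdges]

theorem numCompOfEdges_insert_add_one_of_not_reachable {A : Finset (Sym2 V)} {u v : V}
    (h : ¬(fromEdgeSet (A : Set (Sym2 V))).Reachable u v) :
    numCompOfEdges (insert s(u, v) A) + 1 = numCompOfEdges A := by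
  rw [numCompOfEdges, coe_insert, fromEdgeSet_insert,
    card_connectedComponent_sup_edge_add_one h, numCompOfEdges]

noncomputable def graphicRank (A : Finset (Sym2 V)) : ℕ :=
  Fintype.card V - numCompOfEdges A

theorem isRankFunction_graphicRank : IsRankFunction (graphicRank (V := V)) := by
  have hle := numCompOfEdges_le_card (V := V)
  have hins (A : Finset (Sym2 V)) (e : Sym2 V) : numCompOfEdges (insert e A) = numCompOfEdges A ∨
      numCompOfEdges (insert e A) + 1 = numCompOfEdges A := by
    induction e using Sym2.ind with | h u v =>
    by_cases h : (fromEdgeSet (A : Set (Sym2 V))).Reachable u v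
    · exact .inl (numCompOfEdges_insert_of_reachable h)
    · exact .inr (numCompOfEdges_insert_add_one_of_not_reachable h)
  refine ⟨by simp [graphicRank, numCompOfEdges_empty], fun A e => ?_, fun A e => ?_,
    fun {A B e} hAB hB => ?_⟩
  · have := hins A e; have := hle A; unfold graphicRank; omega
  · have := hins A e; have := hle A; unfold graphicRank; omega
  · induction e using Sym2.ind with | h u v =>
    have hB' : ¬(fromEdgeSet (B : Set (Sym2 V))).Reachable u v := fun h => by
      have := numCompOfEdges_insert_of_reachable h; have := hle B
      unfold graphicRank at hB; omega
    have hA' : ¬(fromEdgeSet (A : Set (Sym2 V))).Reachable u v :=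
      fun h => hB' (h.mono (fromEdgeSet_mono (coe_subset.mpr hAB)))
    have := numCompOfEdges_insert_add_one_of_not_reachable hA'; have := hle A
    unfold graphicRank; omega

theorem iteratedDeriv_chromPoly_div_pow_at_one (G : SimpleGraph V) [DecidableRel G.Adj]
    (ℓ : ℕ) :
    iteratedDeriv ℓ (fun q : ℝ => chromPoly G q / q ^ Nat.card G.ConnectedComponent) 1 =
      ℓ.factorial * charPolyTaylorCoeff graphicRank G.edgeFinset ℓ := by
  have hc (A) (hA : A ∈ G.edgeFinset.powerset) :
      Nat.card G.ConnectedComponent ≤ numCompOfEdges A :=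
    numCompOfEdges_edgeFinset G ▸ numCompOfEdges_anti (mem_powerset.mp hA)
  set c := Nat.card G.ConnectedComponent
  have hpoly : (fun q : ℝ => chromPoly G q / q ^ c) =ᶠ[nhds 1]
      fun q => ∑ A ∈ G.edgeFinset.powerset, (-1) ^ A.card * q ^ (numCompOfEdges A - c) := by
    filter_upwards [eventually_ne_nhds one_ne_zero] with q hq
    rw [chromPoly, sum_div]
    exact sum_congr rfl fun A hA => by rw [mul_div_assoc, pow_sub₀ q hq (hc A hA), div_eq_mul_inv]
  rw [hpoly.iteratedDeriv_eq, iteratedDeriv_sum_mul_pow_at_one, charPolyTaylorCoeff]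
  push_cast
  congr 1
  refine sum_congr rfl fun A hA => ?_
  have := numCompOfEdges_le_card A
  rw [graphicRank, graphicRank, numCompOfEdges_edgeFinset,
    show Fintype.card V - c - (Fintype.card V - numCompOfEdges A) = numCompOfEdges A - c by
      have := hc A hA; omega]

end Graphic

/-- Let `G` be a finite simple graph with `n` vertices and `c` components, and let
`P_G` be its chromatic polynomial.  Then for every `ℓ ≥ 0`,
`(-1)^{n-c-ℓ} (d^ℓ/dq^ℓ)(P_G(q)/q^c) |_{q=1} ≥ 0`. -/
theorem chromPoly_derivatives_at_one {V : Type*} [Fintype V] [DecidableEq V]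
    (G : SimpleGraph V) [DecidableRel G.Adj]
    (n c : ℕ) (hn : n = Fintype.card V) (hc : c = Nat.card G.ConnectedComponent)
    (ℓ : ℕ) :
    0 ≤ (-1 : ℝ) ^ ((n : ℤ) - c - ℓ) *
      iteratedDeriv ℓ (fun q : ℝ => chromPoly G q / q ^ c) 1 := by
  subst hn hc
  have hrank : graphicRank G.edgeFinset = Fintype.card V - Nat.card G.ConnectedComponent := by
    rw [graphicRank, numCompOfEdges_edgeFinset]
  have hcn : Nat.card G.ConnectedComponent ≤ Fintype.card V :=
    numCompOfEdges_edgeFinset G ▸ numCompOfEdges_le_card _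
  have hsign := isRankFunction_graphicRank.neg_one_pow_mul_charPolyTaylorCoeff_nonneg
    G.edgeFinset ℓ
  rw [iteratedDeriv_chromPoly_div_pow_at_one, ← Nat.cast_sub hcn, neg_one_zpow_natCast_sub,
    ← hrank, mul_left_comm]
  exact mul_nonneg (by positivity) (by exact_mod_cast hsign)
end

section
/- Let M be a loopless matroid with finite ground set E, rank function r, and rank r(M) = r(E); let 0 < q₀ < 1, and let v : E → ℝ satisfy −1 − √(1−q₀) < v_e < −q₀ for all e ∈ E. Then for every integer 0 ≤ ℓ ≤ r(M), the ℓ-th derivative of the function q ↦ q^{r(M)} Z̃_M(q,v), evaluated at q = q₀, satisfies (−1)^{r(M)−ℓ} · (d^ℓ/dq^ℓ)(q^{r(M)} Z̃_M(q,v))|_{q=q₀} > 0. -/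
/-!
Write `P_E(q) = q^{r(E)} Z̃_{M|E}(q,v)`, a polynomial of degree at most `r(E)`, and say that
a polynomial `p` has alternating derivatives of order `n` at `q₀` when
`(-1)^{n-ℓ} p^{(ℓ)}(q₀) > 0` for all `ℓ ≤ n`. We show by induction on `|E|` that `P_E` has
this property with `n = r(E)`. If some `e ∈ E` has a parallel element `f`, the two merge into
a single element of weight `(1 + v_e)(1 + v_f) - 1`, which stays in `(-1 - √(1 - q₀), -q₀)`
because `|1 + v| < √(1 - q₀)` on that interval. Otherwise pick any `e`; the contraction `M/e`
stays loopless on `E - e` and `P_E = q^{r(E) - r(E-e)} P_{E-e} + v_e P^{M/e}_{E-e}`. If `e` is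
not a coloop this is a sum of two polynomials with the right signs (`v_e < 0` flips the one of
rank `r(E) - 1`); if `e` is a coloop, then `P^{M/e}_{E-e} = P_{E-e}` and
`P_E = (q + v_e) P_{E-e}` with `q₀ + v_e < 0`.
-/

open Finset

/-- A matroid with ground set the finite type `α`, presented by its rank function
(normalized, monotone, submodular). -/
structure RankMatroid (α : Type*) [DecidableEq α] where
  r : Finset α → ℕ
  r_le_card : ∀ A : Finset α, r A ≤ A.card
  mono : ∀ ⦃A B : Finset α⦄, A ⊆ B → r A ≤ r B
  submodular : ∀ A B : Finset α, r (A ∪ B) + r (A ∩ B) ≤ r A + r B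

/-- The multivariate Tutte polynomial of a matroid:
`Z̃_M(q,v) = ∑_{A ⊆ E} q^{-r(A)} ∏_{e ∈ A} v_e`. -/
noncomputable def matZ {α : Type*} [DecidableEq α] [Fintype α] (M : RankMatroid α)
    (q : ℝ) (v : α → ℝ) : ℝ :=
  ∑ A ∈ (Finset.univ : Finset α).powerset, q ^ (-(M.r A : ℤ)) * ∏ e ∈ A, v e

open Polynomial

lemma neg_one_pow_succ_sub {R : Type*} [Ring R] {n ℓ : ℕ} (h : ℓ ≤ n) :
    (-1 : R) ^ (n + 1 - ℓ) = -(-1) ^ (n - ℓ) := by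
  rw [Nat.succ_sub h, pow_succ, mul_neg_one]

lemma Finset.sum_powerset_insert_insert {α β : Type*} [DecidableEq α] [AddCommMonoid β]
    {S : Finset α} {e f : α} (heS : e ∉ S) (hfS : f ∉ insert e S) (g : Finset α → β) :
    ∑ A ∈ (insert f (insert e S)).powerset, g A
      = ∑ B ∈ S.powerset,
          (g B + g (insert e B) + (g (insert f B) + g (insert f (insert e B)))) := by
  rw [sum_powerset_insert hfS, sum_powerset_insert heS, sum_powerset_insert heS,
    ← sum_add_distrib, ← sum_add_distrib, ← sum_add_distrib]

namespace Polynomial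

variable {R : Type*} [CommRing R]

lemma iterate_derivative_X_add_C_mul (a : R) (p : R[X]) (n : ℕ) :
    derivative^[n] ((X + C a) * p)
      = (X + C a) * derivative^[n] p + n • derivative^[n - 1] p := by
  rw [add_mul, iterate_map_add, mul_comm X, iterate_derivative_mul_X, iterate_derivative_C_mul]
  ring

variable [LinearOrder R] [IsStrictOrderedRing R]

def HasAlternatingDerivs (p : R[X]) (x : R) (n : ℕ) : Prop :=
  ∀ ℓ ≤ n, 0 < (-1) ^ (n - ℓ) * (derivative^[ℓ] p).eval x

lemma hasAlternatingDerivs_one (x : R) : HasAlternatingDerivs (1 : R[X]) x 0 := by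
  intro ℓ hℓ
  obtain rfl : ℓ = 0 := Nat.le_zero.mp hℓ
  simp

namespace HasAlternatingDerivs

variable {p q : R[X]} {x : R} {n : ℕ}

lemma add_C_mul (hp : HasAlternatingDerivs p x (n + 1)) (hq : HasAlternatingDerivs q x n)
    (hdeg : q.natDegree ≤ n) {c : R} (hc : c < 0) :
    HasAlternatingDerivs (p + C c * q) x (n + 1) := by
  intro ℓ hℓ
  rw [iterate_map_add, iterate_derivative_C_mul, eval_add, eval_mul, eval_C, mul_add]
  rcases hℓ.lt_or_eq with hlt | rfl
  · have hpℓ := hp ℓ hℓ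
    have hqℓ := hq ℓ (Nat.lt_succ_iff.mp hlt)
    rw [neg_one_pow_succ_sub (Nat.lt_succ_iff.mp hlt)] at hpℓ ⊢
    nlinarith
  · rw [iterate_derivative_eq_zero (Nat.lt_succ_of_le hdeg)]
    simpa using hp (n + 1) le_rfl

lemma X_add_C_mul (hp : HasAlternatingDerivs p x n) (hdeg : p.natDegree ≤ n) {a : R}
    (ha : x + a < 0) : HasAlternatingDerivs ((X + C a) * p) x (n + 1) := by
  intro ℓ hℓ
  rw [iterate_derivative_X_add_C_mul, eval_add, eval_mul, eval_smul, eval_add, eval_X, eval_C,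
    nsmul_eq_mul]
  rcases ℓ.eq_zero_or_pos with rfl | hℓ₀
  · have := hp 0 (Nat.zero_le n)
    rw [neg_one_pow_succ_sub (Nat.zero_le n)]
    simp only [Nat.cast_zero, zero_mul, add_zero, Function.iterate_zero_apply] at this ⊢
    nlinarith
  obtain ⟨k, rfl⟩ := Nat.exists_eq_add_of_lt hℓ₀
  have hk := hp k (by omega)
  simp only [zero_add, Nat.add_sub_cancel, Nat.cast_add, Nat.cast_one] at hk ⊢
  rw [show n + 1 - (k + 1) = n - k by omega]
  rcases (show k + 1 ≤ n ∨ k = n by omega) with hlt | rfl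
  · have hk₁ := hp (k + 1) hlt
    rw [show n - k = n - (k + 1) + 1 by omega, pow_succ] at hk ⊢
    nlinarith
  · rw [iterate_derivative_eq_zero (Nat.lt_succ_of_le hdeg)]
    simp only [Nat.sub_self, pow_zero, one_mul, eval_zero, mul_zero, zero_add] at hk ⊢
    positivity

end HasAlternatingDerivs

lemma iteratedDeriv_eval {𝕜 : Type*} [NontriviallyNormedField 𝕜] (p : 𝕜[X]) (k : ℕ) :
    iteratedDeriv k (fun x => p.eval x) = fun x => (derivative^[k] p).eval x := by
  induction k generalizing p with
  | zero => simp
  | succ k ih =>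
    have hderiv : deriv (fun x => p.eval x) = fun x => (derivative p).eval x := by
      funext x
      exact p.deriv
    rw [iteratedDeriv_succ', hderiv, ih, Function.iterate_succ_apply]

end Polynomial

namespace RankMatroid

variable {α : Type*} [DecidableEq α] (M : RankMatroid α)

lemma r_empty : M.r ∅ = 0 :=
  Nat.le_zero.mp (M.r_le_card ∅)

lemma r_insert_le (e : α) (A : Finset α) : M.r (insert e A) ≤ M.r A + 1 := by
  have h := M.submodular A {e}
  have h₁ : M.r {e} ≤ 1 := M.r_le_card {e}
  rw [union_singleton] at h
  omega

variable {M}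

lemma one_le_r_of_mem {e : α} (he : M.r {e} = 1) {A : Finset α} (heA : e ∈ A) : 1 ≤ M.r A :=
  he ▸ M.mono (singleton_subset_iff.mpr heA)

lemma r_insert_of_parallel {e f : α} (he : M.r {e} = 1) (hef : M.r {e, f} = 1)
    {S : Finset α} (heS : e ∈ S) : M.r (insert f S) = M.r S := by
  have h := M.submodular S {e, f}
  have hunion : S ∪ {e, f} = insert f S := by
    rw [union_insert, insert_eq_of_mem (mem_union_left _ heS),
      union_singleton]
  have hinter : 1 ≤ M.r (S ∩ {e, f}) :=
    one_le_r_of_mem he (mem_inter.mpr ⟨heS, mem_insert_self e {f}⟩)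
  have hmono : M.r S ≤ M.r (insert f S) := M.mono (subset_insert f S)
  rw [hunion, hef] at h
  omega

lemma r_erase_of_parallel {E : Finset α} {e f : α} (he : M.r {e} = 1) (hef : M.r {e, f} = 1)
    (heE : e ∈ E) (hfE : f ∈ E) (hne : e ≠ f) : M.r (E.erase f) = M.r E := by
  simpa [insert_erase hfE] using
    (r_insert_of_parallel he hef (mem_erase.mpr ⟨hne, heE⟩)).symm

lemma r_insert_of_coloop {E : Finset α} {e : α} (heE : e ∈ E)
    (hcoloop : M.r (E.erase e) < M.r E) {A : Finset α} (hA : A ⊆ E.erase e) : M.r (insert e A) = M.r A + 1 := by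
  have h := M.submodular (insert e A) (E.erase e)
  rw [insert_union, union_eq_right.mpr hA, insert_erase heE,
    insert_inter_of_notMem (notMem_erase e E), inter_eq_left.mpr hA] at h
  have := M.r_insert_le e A
  omega

def contract (e : α) (he : M.r {e} = 1) : RankMatroid α where
  r A := M.r (insert e A) - 1
  r_le_card A := by
    have := M.r_insert_le e A
    have := M.r_le_card A
    omega
  mono A B hAB := Nat.sub_le_sub_right (M.mono (insert_subset_insert e hAB)) 1
  submodular A B := by
    have h := M.submodular (insert e A) (insert e B)
    rw [← insert_union_distrib, ← insert_inter_distrib] at h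
    have := one_le_r_of_mem he (mem_insert_self e (A ∪ B))
    have := one_le_r_of_mem he (mem_insert_self e (A ∩ B))
    have := one_le_r_of_mem he (mem_insert_self e A)
    have := one_le_r_of_mem he (mem_insert_self e B)
    omega

lemma contract_r {e : α} (he : M.r {e} = 1) (A : Finset α) :
    (M.contract e he).r A = M.r (insert e A) - 1 := rfl

lemma contract_r_singleton {e x : α} (he : M.r {e} = 1)
    (hnpar : M.r {e, x} ≠ 1) : (M.contract e he).r {x} = 1 := by
  have hle : M.r {e, x} ≤ 2 := (M.r_le_card _).trans (card_le_two)
  have hge : 1 ≤ M.r {e, x} := one_le_r_of_mem he (mem_insert_self e {x})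
  rw [contract_r]
  change M.r {e, x} - 1 = 1
  omega

variable (M) in
/-- `q^{r(E)} Z̃_{M|E}(q, v)` as a polynomial in `q`. -/
noncomputable def tuttePoly (E : Finset α) (v : α → ℝ) : ℝ[X] :=
  ∑ A ∈ E.powerset, C (∏ e ∈ A, v e) * X ^ (M.r E - M.r A)

lemma natDegree_tuttePoly_le (E : Finset α) (v : α → ℝ) :
    (M.tuttePoly E v).natDegree ≤ M.r E :=
  natDegree_sum_le_of_forall_le _ _ fun _ _ =>
    (natDegree_C_mul_le _ _).trans ((natDegree_X_pow_le _).trans (Nat.sub_le _ _))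

lemma tuttePoly_empty (v : α → ℝ) : M.tuttePoly ∅ v = 1 := by
  simp [tuttePoly, r_empty]

lemma eval_tuttePoly_univ [Fintype α] (v : α → ℝ) {q : ℝ} (hq : q ≠ 0) :
    (M.tuttePoly univ v).eval q = q ^ M.r univ * matZ M q v := by
  simp only [tuttePoly, matZ, eval_finsetSum, mul_sum, eval_mul, eval_C, eval_pow, eval_X]
  refine sum_congr rfl fun A _ => ?_
  rw [← zpow_natCast, ← zpow_natCast, Nat.cast_sub (M.mono (subset_univ A)),
    zpow_sub₀ hq, zpow_neg]
  ring

lemma tuttePoly_eq_deletion_add_contraction {E : Finset α} {e : α} (heE : e ∈ E)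
    (he : M.r {e} = 1) (v : α → ℝ) :
    M.tuttePoly E v = X ^ (M.r E - M.r (E.erase e)) * M.tuttePoly (E.erase e) v
      + C (v e) * (M.contract e he).tuttePoly (E.erase e) v := by
  rw [tuttePoly, ← insert_erase heE, sum_powerset_insert (notMem_erase e E),
    insert_erase heE, tuttePoly, tuttePoly, mul_sum, mul_sum]
  congr 1 <;> refine sum_congr rfl fun A hA => ?_
  · have h₁ : M.r A ≤ M.r (E.erase e) := M.mono (mem_powerset.mp hA)
    have h₂ : M.r (E.erase e) ≤ M.r E := M.mono (erase_subset e E)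
    rw [show M.r E - M.r A = (M.r E - M.r (E.erase e)) + (M.r (E.erase e) - M.r A) by omega,
      pow_add]
    ring
  · have hA' : A ⊆ E.erase e := mem_powerset.mp hA
    have h₁ : 1 ≤ M.r (insert e A) := one_le_r_of_mem he (mem_insert_self e A)
    have h₂ : M.r (insert e A) ≤ M.r E :=
      M.mono (insert_subset heE (hA'.trans (erase_subset e E)))
    rw [prod_insert (fun h => notMem_erase e E (hA' h)), contract_r, contract_r,
      insert_erase heE, show M.r E - 1 - (M.r (insert e A) - 1) = M.r E - M.r (insert e A)
      by omega, C_mul]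
    ring

lemma contract_tuttePoly_of_coloop {E : Finset α} {e : α} (heE : e ∈ E) (he : M.r {e} = 1)
    (hcoloop : M.r (E.erase e) < M.r E) (v : α → ℝ) :
    (M.contract e he).tuttePoly (E.erase e) v = M.tuttePoly (E.erase e) v := by
  refine sum_congr rfl fun A hA => ?_
  rw [contract_r, contract_r, insert_erase heE,
    r_insert_of_coloop heE hcoloop (mem_powerset.mp hA)]
  congr 3
  have := r_insert_of_coloop heE hcoloop (Subset.refl _)
  rw [insert_erase heE] at this
  omega

lemma tuttePoly_eq_merge_parallel {E : Finset α} {e f : α} (heE : e ∈ E) (hfE : f ∈ E)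
    (hne : e ≠ f) (he : M.r {e} = 1) (hf : M.r {f} = 1) (hef : M.r {e, f} = 1) (v : α → ℝ) :
    M.tuttePoly E v
      = M.tuttePoly (E.erase f) (Function.update v e ((1 + v e) * (1 + v f) - 1)) := by
  set S := (E.erase f).erase e
  have heS : e ∉ S := notMem_erase e _
  have hfS : f ∉ insert e S := by simp [S, hne.symm]
  have hE' : insert e S = E.erase f := insert_erase (mem_erase.mpr ⟨hne, heE⟩)
  have hE : insert f (insert e S) = E := by rw [hE', insert_erase hfE]
  rw [tuttePoly, tuttePoly, r_erase_of_parallel he hef heE hfE hne]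
  generalize M.r E = n
  rw [← hE', ← hE, sum_powerset_insert heS, sum_powerset_insert_insert heS hfS,
    ← sum_add_distrib]
  refine sum_congr rfl fun B hB => ?_
  have heB : e ∉ B := fun h => heS (mem_powerset.mp hB h)
  have hfB : f ∉ B := fun h => hfS (mem_insert_of_mem (mem_powerset.mp hB h))
  have hfeB : f ∉ insert e B := by simp [hne.symm, hfB]
  have hrfe : M.r (insert f (insert e B)) = M.r (insert e B) :=
    r_insert_of_parallel he hef (mem_insert_self e B)
  have hrf : M.r (insert f B) = M.r (insert e B) := by
    have h := r_insert_of_parallel hf (pair_comm e f ▸ hef) (mem_insert_self f B)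
    rw [insert_comm, hrfe] at h
    exact h.symm
  have hprod : ∀ A ⊆ B, ∏ x ∈ A, Function.update v e ((1 + v e) * (1 + v f) - 1) x
      = ∏ x ∈ A, v x := fun A hA => prod_congr rfl fun x hx =>
    Function.update_of_ne (ne_of_mem_of_not_mem (hA hx) heB) _ _
  rw [prod_insert heB, prod_insert heB, prod_insert hfB,
    prod_insert hfeB, prod_insert heB, hprod B subset_rfl, Function.update_self,
    hrfe, hrf]
  simp only [C_mul, C_add, C_sub, C_1]
  ring

lemma hasAlternatingDerivs_of_deletion_contraction {E : Finset α} {e : α} (heE : e ∈ E)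
    (he : M.r {e} = 1) {v : α → ℝ} {x : ℝ} (hx : 0 ≤ x) (hxv : x + v e < 0)
    (hdel : HasAlternatingDerivs (M.tuttePoly (E.erase e) v) x (M.r (E.erase e)))
    (hcon : HasAlternatingDerivs ((M.contract e he).tuttePoly (E.erase e) v) x
      ((M.contract e he).r (E.erase e))) :
    HasAlternatingDerivs (M.tuttePoly E v) x (M.r E) := by
  have hr_con : (M.contract e he).r (E.erase e) = M.r E - 1 := by
    rw [contract_r, insert_erase heE]
  have hr_pos : 1 ≤ M.r E := one_le_r_of_mem he heE
  have hr_del : M.r E ≤ M.r (E.erase e) + 1 := by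
    simpa [insert_erase heE] using M.r_insert_le e (E.erase e)
  have hr_le : M.r (E.erase e) ≤ M.r E := M.mono (erase_subset e E)
  rw [tuttePoly_eq_deletion_add_contraction heE he]
  rcases hr_le.lt_or_eq with hcoloop | hnoncoloop
  · rw [contract_tuttePoly_of_coloop heE he hcoloop, show M.r E - M.r (E.erase e) = 1 by omega,
      pow_one, ← add_mul, show M.r E = M.r (E.erase e) + 1 by omega]
    exact hdel.X_add_C_mul (natDegree_tuttePoly_le _ _) hxv
  · obtain ⟨n, hn⟩ := Nat.exists_eq_add_of_le' hr_pos
    rw [hnoncoloop, Nat.sub_self, pow_zero, one_mul, hn]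
    rw [hnoncoloop, hn] at hdel
    rw [hr_con, hn, Nat.add_sub_cancel] at hcon
    exact hdel.add_C_mul hcon ((natDegree_tuttePoly_le _ _).trans (by omega)) (by linarith)

lemma merge_weight_mem_Ioo {q a b : ℝ} (hq : 0 ≤ q) (ha : a ∈ Set.Ioo (-1 - √(1 - q)) (-q))
    (hb : b ∈ Set.Ioo (-1 - √(1 - q)) (-q)) :
    (1 + a) * (1 + b) - 1 ∈ Set.Ioo (-1 - √(1 - q)) (-q) := by
  obtain ⟨ha₁, ha₂⟩ := ha
  obtain ⟨hb₁, hb₂⟩ := hb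
  set s := √(1 - q)
  have hq₁ : q < 1 := by
    by_contra! h
    have : s = 0 := Real.sqrt_eq_zero'.mpr (by linarith)
    linarith
  have hs_sq : s ^ 2 = 1 - q := Real.sq_sqrt (by linarith)
  have hs : s ≤ 1 := Real.sqrt_le_one.mpr (by linarith)
  have hs₀ : 0 ≤ s := Real.sqrt_nonneg _
  -- `1 - q = s² ≤ s`, so both `|1 + a|` and `|1 + b|` are below `s`
  have hA : |1 + a| < s := abs_lt.mpr ⟨by linarith, by nlinarith⟩
  have hB : |1 + b| < s := abs_lt.mpr ⟨by linarith, by nlinarith⟩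
  have hAB : |(1 + a) * (1 + b)| < s ^ 2 := by
    rw [abs_mul, sq]
    exact mul_lt_mul'' hA hB (abs_nonneg _) (abs_nonneg _)
  obtain ⟨h₁, h₂⟩ := abs_lt.mp hAB
  constructor <;> nlinarith

theorem hasAlternatingDerivs_tuttePoly {q : ℝ} (hq : 0 ≤ q) (E : Finset α) (M : RankMatroid α)
    (v : α → ℝ) (hloop : ∀ e ∈ E, M.r {e} = 1)
    (hv : ∀ e ∈ E, v e ∈ Set.Ioo (-1 - √(1 - q)) (-q)) :
    HasAlternatingDerivs (M.tuttePoly E v) q (M.r E) := by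
  induction E using strongInduction generalizing M v with
  | H E ih =>
  rcases E.eq_empty_or_nonempty with rfl | ⟨e, heE⟩
  · rw [tuttePoly_empty, r_empty]
    exact hasAlternatingDerivs_one q
  have hloop_erase : ∀ f ∈ E, ∀ x ∈ E.erase f, M.r {x} = 1 :=
    fun f _ x hx => hloop x (mem_of_mem_erase hx)
  by_cases hpar : ∃ f ∈ E, f ≠ e ∧ M.r {e, f} = 1
  · obtain ⟨f, hfE, hfe, hef⟩ := hpar
    rw [tuttePoly_eq_merge_parallel heE hfE hfe.symm (hloop e heE) (hloop f hfE) hef,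
      ← r_erase_of_parallel (hloop e heE) hef heE hfE hfe.symm]
    refine ih _ (erase_ssubset hfE) M _ (hloop_erase f hfE) fun x hx => ?_
    rcases eq_or_ne x e with rfl | hxe
    · simpa using merge_weight_mem_Ioo hq (hv x heE) (hv f hfE)
    · simpa [hxe] using hv x (mem_of_mem_erase hx)
  · push Not at hpar
    have hv_erase : ∀ x ∈ E.erase e, v x ∈ Set.Ioo (-1 - √(1 - q)) (-q) :=
      fun x hx => hv x (mem_of_mem_erase hx)
    refine hasAlternatingDerivs_of_deletion_contraction heE (hloop e heE) hq
      (by linarith [(hv e heE).2])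
      (ih _ (erase_ssubset heE) M v (hloop_erase e heE) hv_erase)
      (ih _ (erase_ssubset heE) _ v (fun x hx => ?_) hv_erase)
    obtain ⟨hxe, hxE⟩ := mem_erase.mp hx
    exact contract_r_singleton (hloop e heE) (hpar x hxE hxe)

end RankMatroid

open RankMatroid in
theorem matZ_derivatives_sign_general {α : Type*} [DecidableEq α] [Fintype α]
    (M : RankMatroid α) (hloopless : ∀ e : α, M.r {e} = 1)
    (q₀ : ℝ) (hq0 : 0 < q₀) (v : α → ℝ)
    (hv : ∀ e : α, -1 - Real.sqrt (1 - q₀) < v e ∧ v e < -q₀)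
    (ℓ : ℕ) (hℓ : ℓ ≤ M.r Finset.univ) :
    0 < (-1 : ℝ) ^ ((M.r Finset.univ : ℤ) - ℓ) *
      iteratedDeriv ℓ (fun q : ℝ => q ^ (M.r Finset.univ) * matZ M q v) q₀ := by
  have hpoly : (fun q : ℝ => (M.tuttePoly univ v).eval q)
      =ᶠ[nhds q₀] fun q : ℝ => q ^ (M.r univ) * matZ M q v := by
    filter_upwards [eventually_ne_nhds hq0.ne'] with q hq
    exact eval_tuttePoly_univ v hq
  rw [← hpoly.iteratedDeriv_eq, iteratedDeriv_eval, ← Nat.cast_sub hℓ, zpow_natCast]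
  exact hasAlternatingDerivs_tuttePoly hq0.le univ M v (fun e _ => hloopless e)
    (fun e _ => hv e) ℓ hℓ

/-- Let `M` be a loopless matroid (every singleton is independent) of rank `r(M)`,
let `0 < q₀ < 1`, and suppose `-1 - √(1-q₀) < v_e < -q₀` for all elements `e`.
Then for every `0 ≤ ℓ ≤ r(M)`,
`(-1)^{r(M)-ℓ} (d^ℓ/dq^ℓ)(q^{r(M)} Z̃_M(q,v)) |_{q=q₀} > 0`. -/
theorem matZ_derivatives_sign {α : Type*} [DecidableEq α] [Fintype α]
    (M : RankMatroid α) (hloopless : ∀ e : α, M.r {e} = 1)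
    (q₀ : ℝ) (hq0 : 0 < q₀) (hq1 : q₀ < 1) (v : α → ℝ)
    (hv : ∀ e : α, -1 - Real.sqrt (1 - q₀) < v e ∧ v e < -q₀)
    (ℓ : ℕ) (hℓ : ℓ ≤ M.r Finset.univ) :
    0 < (-1 : ℝ) ^ ((M.r Finset.univ : ℤ) - ℓ) *
      iteratedDeriv ℓ (fun q : ℝ => q ^ (M.r Finset.univ) * matZ M q v) q₀ :=
  matZ_derivatives_sign_general M hloopless q₀ hq0 v hv ℓ hℓ
end
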